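/- Let a₁,…,a_k be pairwise distinct letters of an alphabet A, with k ≥ 1. Then for each i with 1 ≤ i ≤ k, the number of occurrences of the letter a_i in Pal(a₁·a₂⋯a_k) equals 2^{k−i}; consequently the frequency of a_i in the purely periodic infinite word (Pal(a₁⋯a_k))^ω is 2^{k−i}/(2^k − 1), and these frequencies are pairwise distinct. -/

import Mathlib

/-- The palindromic right closure `w⁽⁺⁾`: the shortest palindrome having `w` as a prefix. -/
def palClosure {A : Type*} [DecidableEq A] (w : List A) : List A :=
  w ++ (w.take (Nat.find (⟨w.length, by simp⟩ :
    ∃ i, (w.drop i).reverse = w.drop i))).reverse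

/-- Iterated palindromic closure: `Pal ε = ε`, `Pal (w·x) = (Pal w · x)⁽⁺⁾`. -/
def Pal {A : Type*} [DecidableEq A] (w : List A) : List A :=
  w.foldl (fun p x => palClosure (p ++ [x])) []

/-- `u` is a factor of the infinite word `s`. -/
def IsFactorOf {A : Type*} (u : List A) (s : ℕ → A) : Prop :=
  ∃ i : ℕ, u = (List.range u.length).map (fun j => s (i + j))

/-- `s` is balanced. -/
def IsBalanced {A : Type*} [DecidableEq A] (s : ℕ → A) : Prop :=
  ∀ u v : List A, IsFactorOf u s → IsFactorOf v s → u.length = v.length →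
    ∀ a : A, u.count a ≤ v.count a + 1

/-- `u` is a prefix of the infinite word `s`. -/
def IsPrefixOf {A : Type*} (u : List A) (s : ℕ → A) : Prop :=
  u = (List.range u.length).map s

/-- `s` is a standard episturmian sequence with directive sequence `Δ`. -/
def IsStdEpisturmian {A : Type*} [DecidableEq A] (s Δ : ℕ → A) : Prop :=
  ∀ n : ℕ, IsPrefixOf (Pal ((List.range n).map Δ)) s

/-- Concatenation of a finite word and an infinite word. -/
def wcat {A : Type*} (u : List A) (s : ℕ → A) : ℕ → A :=
  fun n => if h : n < u.length then u.get ⟨n, h⟩ else s (n - u.length)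

/-- The constant infinite word `c^ω`. -/
def constW {A : Type*} (c : A) : ℕ → A := fun _ => c

/-- The purely periodic infinite word `w^ω` (`d` is a default letter, irrelevant
when `w` is nonempty). -/
def perW {A : Type*} (w : List A) (d : A) : ℕ → A :=
  fun n => w.getD (n % w.length) d

/-- At least three distinct letters occur in `s`. -/
def ThreeLetters {A : Type*} (s : ℕ → A) : Prop :=
  ∃ a b c : A, a ≠ b ∧ a ≠ c ∧ b ≠ c ∧
    a ∈ Set.range s ∧ b ∈ Set.range s ∧ c ∈ Set.range s

lemma palClosure_of_palindrome {A : Type*} [DecidableEq A] (p : List A) (x : A)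
    (hp : p.reverse = p) (hx : x ∉ p) :
    palClosure (p ++ [x]) = p ++ [x] ++ p := by
  unfold palClosure
  have hfind : Nat.find (⟨(p ++ [x]).length, by simp⟩ :
      ∃ i, ((p ++ [x]).drop i).reverse = (p ++ [x]).drop i) = p.length := by
    rw [Nat.find_eq_iff]
    refine ⟨by rw [List.drop_left]; rfl, ?_⟩
    intro i hi hpal
    rw [List.drop_append_of_le_length (le_of_lt hi)] at hpal
    rcases h : p.drop i with _ | ⟨y, t⟩
    · exact absurd (List.drop_eq_nil_iff.mp h) (by omega)
    · rw [h] at hpal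
      simp [List.reverse_append] at hpal
      obtain ⟨rfl, -⟩ := hpal
      exact hx (List.mem_of_mem_drop (i := i) (by rw [h]; exact List.mem_cons_self))
  rw [hfind, List.take_left, hp]
lemma Pal_concat {A : Type*} [DecidableEq A] (w : List A) (x : A) :
    Pal (w ++ [x]) = palClosure (Pal w ++ [x]) := by
  simp [Pal, List.foldl_append]

lemma Pal_spec {A : Type*} [DecidableEq A] (a : ℕ → A) (k : ℕ)
    (hinj : Set.InjOn a (Set.Iio k)) :
    ∀ n ≤ k, (Pal ((List.range n).map a)).reverse = Pal ((List.range n).map a) ∧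
      (∀ x ∈ Pal ((List.range n).map a), ∃ j < n, x = a j) ∧
      (Pal ((List.range n).map a)).length = 2 ^ n - 1 ∧
      (∀ i < n, (Pal ((List.range n).map a)).count (a i) = 2 ^ (n - 1 - i)) := by
  intro n
  induction n with
  | zero => intro _; simp [Pal]
  | succ n ih =>
    intro hn
    obtain ⟨hrev, hmem, hlen, hcnt⟩ := ih (by omega)
    set p := Pal ((List.range n).map a) with hpdef
    have hnotmem : a n ∉ p := by
      intro h
      obtain ⟨j, hj, hje⟩ := hmem _ h
      have := hinj (by simp; omega : (n:ℕ) ∈ Set.Iio k) (by simp; omega : (j:ℕ) ∈ Set.Iio k) hje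
      omega
    have hstep : Pal ((List.range (n+1)).map a) = p ++ [a n] ++ p := by
      rw [List.range_succ, List.map_append, List.map_singleton, Pal_concat,
        palClosure_of_palindrome p (a n) hrev hnotmem]
    rw [hstep]
    have h1 : 1 ≤ 2 ^ n := Nat.one_le_two_pow
    refine ⟨by simp [List.reverse_append, hrev], ?_, ?_, ?_⟩
    · intro x hx
      simp at hx
      rcases hx with hx | hx | hx
      · obtain ⟨j, hj, hje⟩ := hmem _ hx; exact ⟨j, by omega, hje⟩
      · exact ⟨n, by omega, hx⟩
      · obtain ⟨j, hj, hje⟩ := hmem _ hx; exact ⟨j, by omega, hje⟩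
    · simp [hlen]; omega
    · intro i hi
      rw [List.count_append, List.count_append, List.count_singleton]
      rcases eq_or_lt_of_le (Nat.lt_succ_iff.mp hi) with h | h
      · subst h
        rw [List.count_eq_zero_of_not_mem hnotmem]
        simp
      · have hne : a n ≠ a i := fun he =>
          absurd (hinj (by simp; omega) (by simp; omega) he) (by omega)
        rw [hcnt i h]
        simp [hne]
        rw [show n - i = (n-1-i)+1 from by omega, pow_succ]
        ring

lemma map_range_perW {A : Type*} (w : List A) (d : A) :
    (List.range w.length).map (perW w d) = w := by
  apply List.ext_getElem
  · simp
  · intro i h1 h2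
    simp only [List.getElem_map, List.getElem_range]
    simp [perW, Nat.mod_eq_of_lt h2, List.getD_eq_getElem?_getD, List.getElem?_eq_getElem h2]

lemma count_step {A : Type*} [DecidableEq A] (w : List A) (d c : A) (m : ℕ) :
    ((List.range (w.length + m)).map (perW w d)).count c
      = w.count c + ((List.range m).map (perW w d)).count c := by
  rw [List.range_add, List.map_append, List.count_append, List.map_map]
  congr 1
  · rw [map_range_perW]
  · congr 1
    ext j
    simp [perW, Nat.add_mod_left]

lemma count_iter {A : Type*} [DecidableEq A] (w : List A) (d c : A) (q r : ℕ) :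
    ((List.range (w.length * q + r)).map (perW w d)).count c
      = q * w.count c + ((List.range r).map (perW w d)).count c := by
  induction q with
  | zero => simp
  | succ q ih =>
    rw [show w.length * (q+1) + r = w.length + (w.length * q + r) by ring, count_step, ih]
    ring

lemma perW_freq {A : Type*} [DecidableEq A] (w : List A) (d c : A) (hw : w ≠ []) :
    Filter.Tendsto (fun n : ℕ => (((List.range n).map (perW w d)).count c : ℝ) / n)
      Filter.atTop (nhds ((w.count c : ℝ) / w.length)) := by
  set L := w.length with hL
  set C := w.count c with hC
  have hL1 : 1 ≤ L := List.length_pos_iff.mpr hw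
  set f : ℕ → ℕ := fun n => ((List.range n).map (perW w d)).count c with hf
  have key : Filter.Tendsto (fun n : ℕ => (f n : ℝ) / n - (C : ℝ) / L) Filter.atTop (nhds 0) := by
    apply squeeze_zero_norm' (a := fun n : ℕ => (L : ℝ) / n)
    · filter_upwards [Filter.eventually_ge_atTop 1] with n hn1
      have hn0 : (0:ℝ) < n := by exact_mod_cast hn1
      have hLr : (0:ℝ) < L := by exact_mod_cast hL1
      set q := n / L with hq
      set r := n % L with hr
      have hdm : L * q + r = n := Nat.div_add_mod n L
      have hfn : f n = q * C + f r := by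
        rw [← hdm]; exact count_iter w d c q r
      have hfr_le : f r ≤ r := le_trans List.count_le_length (by simp)
      have hrL : r < L := Nat.mod_lt n (by omega)
      have hCL : C ≤ L := List.count_le_length
      have heq : (f n : ℝ) / n - (C : ℝ) / L = ((f r : ℝ) * L - r * C) / (n * L) := by
        have h2 : (n : ℝ) = L * q + r := by exact_mod_cast hdm.symm
        have h3 : (f n : ℝ) = q * C + f r := by exact_mod_cast hfn
        field_simp [h3]
        rw [h2, h3]; ring
      rw [heq]
      rw [Real.norm_eq_abs, abs_div,
        abs_of_pos (show (0:ℝ) < (n:ℝ) * L from by positivity)]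
      rw [div_le_div_iff₀ (by positivity) hn0]
      have hb : |(f r : ℝ) * L - r * C| ≤ L * L := by
        have h4 : (0:ℝ) ≤ (f r : ℝ) * L := by positivity
        have h5 : (f r : ℝ) * L ≤ L * L := by
          have : (f r : ℝ) ≤ L := by exact_mod_cast le_trans hfr_le (le_of_lt hrL)
          nlinarith
        have h6 : (0:ℝ) ≤ (r : ℝ) * C := by positivity
        have h7 : (r : ℝ) * C ≤ L * L := by
          have hr' : (r : ℝ) ≤ L := by exact_mod_cast le_of_lt hrL
          have hc' : (C : ℝ) ≤ L := by exact_mod_cast hCL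
          nlinarith
        rw [abs_le]; constructor <;> nlinarith
      calc |(f r : ℝ) * L - r * C| * n ≤ (L * L) * n := by nlinarith
        _ = L * (n * L) := by ring
    · exact tendsto_const_div_atTop_nhds_zero_nat (L : ℝ)
  have := key.add_const ((C : ℝ) / L)
  simpa using this

/-- For pairwise distinct letters `a₁,…,a_k` (indexed from 0 here, `k ≥ 1`), the letter
`a_{i+1} = a i` occurs `2^{k−1−i}` times in `Pal(a₁⋯a_k)`; hence its frequency in
`(Pal(a₁⋯a_k))^ω` is `2^{k−1−i}/(2^k − 1)`, and these frequencies are pairwise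
distinct. -/
theorem pal_letter_counts_and_frequencies {A : Type*} [DecidableEq A]
    (k : ℕ) (a : ℕ → A)
    (hk : 1 ≤ k) (hinj : Set.InjOn a (Set.Iio k)) :
    ∀ i < k,
      ((Pal ((List.range k).map a)).count (a i) = 2 ^ (k - 1 - i)) ∧
      (Filter.Tendsto
        (fun n : ℕ =>
          (((List.range n).map (perW (Pal ((List.range k).map a)) (a 0))).count (a i) : ℝ) / n)
        Filter.atTop
        (nhds ((2 ^ (k - 1 - i) : ℝ) / (2 ^ k - 1)))) ∧
      (∀ j < k, i ≠ j →
        ((2 ^ (k - 1 - i) : ℝ) / (2 ^ k - 1)) ≠ ((2 ^ (k - 1 - j) : ℝ) / (2 ^ k - 1))) := by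
  intro i hi
  obtain ⟨hrev, hmem, hlen, hcnt⟩ := Pal_spec a k hinj k le_rfl
  set p := Pal ((List.range k).map a) with hp
  have hcount := hcnt i hi
  have h2k : 2 ≤ 2 ^ k := by
    calc 2 = 2 ^ 1 := rfl
      _ ≤ 2 ^ k := Nat.pow_le_pow_right (by norm_num) hk
  have hne : p ≠ [] := by
    intro h
    rw [h] at hlen
    simp at hlen
    omega
  have hcast : (((2:ℕ) ^ k - 1 : ℕ) : ℝ) = (2:ℝ) ^ k - 1 := by
    push_cast [Nat.one_le_two_pow]
    ring
  have hden : (0:ℝ) < (2:ℝ) ^ k - 1 := by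
    have : ((2:ℕ) ^ k : ℝ) = (2:ℝ) ^ k := by push_cast; ring
    have h2 : (2:ℝ) ≤ (2:ℝ) ^ k := by exact_mod_cast h2k
    linarith
  refine ⟨hcount, ?_, ?_⟩
  · have hfreq := perW_freq p (a 0) (a i) hne
    rw [hcount, hlen] at hfreq
    have hnum : (((2:ℕ) ^ (k - 1 - i) : ℕ) : ℝ) = (2:ℝ) ^ (k - 1 - i) := by
      push_cast; ring
    rw [hnum, hcast] at hfreq
    exact hfreq
  · intro j hj hij h
    have hd : (2:ℝ) ^ k - 1 ≠ 0 := ne_of_gt hden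
    rw [div_eq_div_iff hd hd] at h
    have hx := mul_right_cancel₀ hd h
    have hxn : (2:ℕ) ^ (k - 1 - i) = 2 ^ (k - 1 - j) := by exact_mod_cast hx
    have := Nat.pow_right_injective le_rfl hxn
    omega
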